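/- Let A', B', N, C be positive integers with A' + B' < C + N (i.e., writing A = −A', B = −B', the condition −A − B + C + N − 1 > 0 holds). Then ∑_{r=0}^{L} q^{r(C+r−1)} · C_q(A'+B'+C+N−r−1, N−r) · C_q(B'+C−1, B'−r) · C_q(A', r) = C_q(A'+C+N−1, N) · C_q(B'+C+N−1, B'), where L = min(A', B', N, A'+B'+C+N−1). -/

import Mathlib

open Finset

/-- The q-Pochhammer symbol `(a;q)_n = ∏_{j=0}^{n-1} (1 - a q^j)`. -/
noncomputable def qPoch (q a : RatFunc ℚ) (n : ℕ) : RatFunc ℚ :=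
  ∏ j ∈ Finset.range n, (1 - a * q ^ j)

/-- The Gaussian (q-binomial) coefficient `C_q(m, k)`, defined as
`(q;q)_m / ((q;q)_k (q;q)_{m-k})` for `0 ≤ k ≤ m`, and `0` otherwise. -/
noncomputable def qBinom (q : RatFunc ℚ) (m k : ℤ) : RatFunc ℚ :=
  if 0 ≤ k ∧ k ≤ m then
    qPoch q q m.toNat / (qPoch q q k.toNat * qPoch q q (m - k).toNat)
  else 0

/-! Both sides, viewed as functions `F N B C` with `B + C ≥ 1`, satisfy the recurrence
`F (N+1) B C = F N B C + q^(N+1) F (N+1) B (C-1) + q^(N+C) F (N+1) (B-1) C`: on the right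
it is the product of the two q-Pascal rules, on the left the same two rules applied to the
summands. They agree for `N = 0` and for `B + C = 1`, where only the summand `r = B`
survives and the identity becomes the symmetry of a q-trinomial coefficient. Induction on
`N` and then on `B + C` concludes. -/

section

variable {q : RatFunc ℚ}

theorem qPoch_zero (q a : RatFunc ℚ) : qPoch q a 0 = 1 :=
  prod_range_zero _

theorem qPoch_succ (q a : RatFunc ℚ) (n : ℕ) :
    qPoch q a (n + 1) = qPoch q a n * (1 - a * q ^ n) :=
  prod_range_succ _ n

theorem qPoch_self_ne_zero (hq : ¬IsOfFinOrder q) (n : ℕ) : qPoch q q n ≠ 0 :=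
  prod_ne_zero_iff.mpr fun j _ => sub_ne_zero.mpr fun h =>
    hq <| isOfFinOrder_iff_pow_eq_one.mpr ⟨j + 1, j.succ_pos, by rw [pow_succ']; exact h.symm⟩

theorem qBinom_eq_zero {m k : ℤ} (h : k < 0 ∨ m < k) : qBinom q m k = 0 :=
  if_neg (by omega)

theorem qBinom_eq_div (x y : ℕ) {m k : ℤ} (hm : m = x + y) (hk : k = x) :
    qBinom q m k = qPoch q q (x + y) / (qPoch q q x * qPoch q q y) := by
  subst hm hk
  rw [qBinom, if_pos (by omega), add_sub_cancel_left]
  simp only [Int.toNat_natCast, ← Nat.cast_add]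

theorem qBinom_symm (m k : ℤ) : qBinom q m (m - k) = qBinom q m k := by
  unfold qBinom
  by_cases h : 0 ≤ k ∧ k ≤ m
  · rw [if_pos (by omega), if_pos h, sub_sub_cancel, mul_comm]
  · rw [if_neg (by omega), if_neg h]

theorem qBinom_zero_right (hq : ¬IsOfFinOrder q) {m : ℤ} (hm : 0 ≤ m) : qBinom q m 0 = 1 := by
  lift m to ℕ using hm
  rw [qBinom_eq_div 0 m (m := m) (k := 0) (by simp) (by simp), zero_add, qPoch_zero, one_mul,
    div_self (qPoch_self_ne_zero hq m)]

theorem qBinom_self (hq : ¬IsOfFinOrder q) {m : ℤ} (hm : 0 ≤ m) : qBinom q m m = 1 := by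
  rw [← qBinom_symm, sub_self, qBinom_zero_right hq hm]

theorem qBinom_succ_left (hq : ¬IsOfFinOrder q) {m k : ℤ} (h : m ≠ -1 ∨ k ≠ 0) :
    qBinom q (m + 1) k = qBinom q m k + q ^ (m + 1 - k) * qBinom q m (k - 1) := by
  rcases (by omega : (k < 0 ∨ m + 1 < k) ∨ (0 ≤ m ∧ k = 0) ∨ (0 ≤ m ∧ k = m + 1) ∨
      (1 ≤ k ∧ k ≤ m)) with hout | ⟨hm0, rfl⟩ | ⟨hm0, rfl⟩ | hkm
  · rw [qBinom_eq_zero (by omega), qBinom_eq_zero (by omega),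
      qBinom_eq_zero (k := k - 1) (by omega)]
    ring
  · rw [qBinom_zero_right hq hm0, qBinom_zero_right hq (by omega), qBinom_eq_zero (by omega)]
    ring
  · rw [qBinom_self hq (by omega), qBinom_eq_zero (by omega), sub_self, zpow_zero,
      add_sub_cancel_right, qBinom_self hq hm0]
    ring
  · obtain ⟨a, b, rfl, rfl⟩ : ∃ a b : ℕ, k = a + 1 ∧ m = a + 1 + b :=
      ⟨(k - 1).toNat, (m - k).toNat, by omega, by omega⟩
    rw [qBinom_eq_div (a + 1) (b + 1) (by push_cast; ring) (by push_cast; ring),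
      qBinom_eq_div (a + 1) b (by push_cast; ring) (by push_cast; ring),
      qBinom_eq_div a (b + 1) (by push_cast; ring) (by ring),
      show (a : ℤ) + 1 + b + 1 - (a + 1) = (b + 1 : ℕ) by push_cast; ring, zpow_natCast,
      show a + 1 + (b + 1) = a + b + 1 + 1 by ring, show a + 1 + b = a + b + 1 by ring,
      show a + (b + 1) = a + b + 1 by ring]
    have := qPoch_self_ne_zero hq a
    have := qPoch_self_ne_zero hq b
    have := qPoch_self_ne_zero hq (a + 1)
    have := qPoch_self_ne_zero hq (b + 1)
    field_simp
    rw [qPoch_succ q q (a + b + 1), qPoch_succ q q a, qPoch_succ q q b]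
    ring

theorem qBinom_succ_left' (hq : ¬IsOfFinOrder q) {m k : ℤ} (h : m ≠ -1 ∨ k ≠ 0) :
    qBinom q (m + 1) k = qBinom q m (k - 1) + q ^ k * qBinom q m k := by
  have h := qBinom_succ_left hq (m := m) (k := m + 1 - k) (by omega)
  rwa [qBinom_symm, show m + 1 - k = m - (k - 1) by ring, qBinom_symm,
    show m + 1 - (m - (k - 1)) = k by ring, show m - (k - 1) - 1 = m - k by ring,
    qBinom_symm] at h

theorem qBinom_mul_qBinom_eq_qBinom_mul_qBinom (hq : ¬IsOfFinOrder q) (x y z : ℕ) :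
    qBinom q (x + y + z) y * qBinom q (x + z) z =
      qBinom q (x + y + z) (y + z) * qBinom q (y + z) z := by
  rw [qBinom_eq_div y (x + z) (by push_cast; ring) rfl, qBinom_eq_div z x (by ring) rfl,
    qBinom_eq_div (y + z) x (by push_cast; ring) (by push_cast; ring),
    qBinom_eq_div z y (by ring) rfl,
    show y + (x + z) = y + z + x by ring, add_comm z x, add_comm z y]
  have := qPoch_self_ne_zero hq x
  have := qPoch_self_ne_zero hq y
  have := qPoch_self_ne_zero hq z
  have := qPoch_self_ne_zero hq (x + z)
  have := qPoch_self_ne_zero hq (y + z)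
  field_simp

/- `B` and `C` are integers so that the recursion may step to `B - 1 = -1`, where both sides
vanish. -/
noncomputable def suranyiTerm (q : RatFunc ℚ) (A : ℕ) (B C N r : ℤ) : RatFunc ℚ :=
  q ^ (r * (C + r - 1)) * qBinom q (A + B + C + N - r - 1) (N - r) *
    qBinom q (B + C - 1) (B - r) * qBinom q A r

noncomputable def suranyiSum (q : RatFunc ℚ) (A : ℕ) (B C : ℤ) (N : ℕ) : RatFunc ℚ :=
  ∑ r ∈ range (N + 1), suranyiTerm q A B C N r

noncomputable def suranyiProd (q : RatFunc ℚ) (A : ℕ) (B C : ℤ) (N : ℕ) : RatFunc ℚ :=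
  qBinom q (A + C + N - 1) N * qBinom q (B + C + N - 1) B

theorem suranyiTerm_succ (hq : ¬IsOfFinOrder q) (hq₀ : q ≠ 0) (A : ℕ) {B C : ℤ} (N : ℤ)
    {r : ℤ} (hBC : 2 ≤ B + C) (hr : r ≤ N + 1) :
    suranyiTerm q A B C (N + 1) r = suranyiTerm q A B C N r +
      q ^ (N + 1) * suranyiTerm q A B (C - 1) (N + 1) r +
      q ^ (N + C) * suranyiTerm q A (B - 1) C (N + 1) r := by
  have hpascalN := qBinom_succ_left' hq (m := A + B + C + N - r - 1) (k := N + 1 - r)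
    (.inl (by omega))
  have hpascalB := qBinom_succ_left hq (m := B + C - 2) (k := B - r) (.inl (by omega))
  have hexpN : q ^ (r * (C + r - 1)) * q ^ (N + 1 - r) =
      q ^ (N + 1) * q ^ (r * (C - 1 + r - 1)) := by
    rw [← zpow_add₀ hq₀, ← zpow_add₀ hq₀]; ring_nf
  have hexpB : q ^ (r * (C + r - 1)) * q ^ (N + 1 - r) * q ^ (B + C - 2 + 1 - (B - r)) =
      q ^ (N + C) * q ^ (r * (C + r - 1)) := by
    rw [← zpow_add₀ hq₀, ← zpow_add₀ hq₀, ← zpow_add₀ hq₀]; ring_nf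
  unfold suranyiTerm
  linear_combination (norm := ring_nf)
    (q ^ (r * (C + r - 1)) * qBinom q (B + C - 1) (B - r) * qBinom q A r) * hpascalN +
    (q ^ (r * (C + r - 1)) * q ^ (N + 1 - r) * qBinom q (A + B + C + N - r - 1) (N + 1 - r) *
      qBinom q A r) * hpascalB +
    (qBinom q (A + B + C + N - r - 1) (N + 1 - r) * qBinom q (B + C - 2) (B - r) *
      qBinom q A r) * hexpN +
    (qBinom q (A + B + C + N - r - 1) (N + 1 - r) * qBinom q (B + C - 2) (B - r - 1) *
      qBinom q A r) * hexpB

theorem suranyiSum_succ (hq : ¬IsOfFinOrder q) (hq₀ : q ≠ 0) (A : ℕ) {B C : ℤ} (N : ℕ)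
    (hBC : 2 ≤ B + C) :
    suranyiSum q A B C (N + 1) = suranyiSum q A B C N +
      q ^ ((N : ℤ) + 1) * suranyiSum q A B (C - 1) (N + 1) +
      q ^ ((N : ℤ) + C) * suranyiSum q A (B - 1) C (N + 1) := by
  have hext : suranyiSum q A B C N = ∑ r ∈ range (N + 1 + 1), suranyiTerm q A B C N r := by
    rw [sum_range_succ, suranyiTerm, qBinom_eq_zero (k := N - (N + 1 : ℕ)) (by omega)]
    simp only [mul_zero, zero_mul, add_zero, suranyiSum]
  rw [hext]
  unfold suranyiSum
  rw [mul_sum, mul_sum, ← sum_add_distrib, ← sum_add_distrib]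
  refine sum_congr rfl fun r hr => ?_
  push_cast
  exact suranyiTerm_succ hq hq₀ A N hBC (by have := mem_range.mp hr; omega)

theorem suranyiProd_succ (hq : ¬IsOfFinOrder q) (A : ℕ) {B C : ℤ} (N : ℕ)
    (hBC : 2 ≤ B + C) :
    suranyiProd q A B C (N + 1) = suranyiProd q A B C N +
      q ^ ((N : ℤ) + 1) * suranyiProd q A B (C - 1) (N + 1) +
      q ^ ((N : ℤ) + C) * suranyiProd q A (B - 1) C (N + 1) := by
  have hpascalA := qBinom_succ_left' hq (m := A + C + N - 1) (k := N + 1) (.inr (by omega))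
  have hpascalB := qBinom_succ_left hq (m := B + C + N - 1) (k := B) (.inl (by omega))
  unfold suranyiProd
  push_cast
  linear_combination (norm := ring_nf)
    qBinom q (A + C + N) (N + 1) * hpascalB + qBinom q (B + C + N - 1) B * hpascalA

theorem suranyiSum_zero (hq : ¬IsOfFinOrder q) (A : ℕ) {B C : ℤ} (hBC : 1 ≤ B + C) :
    suranyiSum q A B C 0 = suranyiProd q A B C 0 := by
  simp only [suranyiSum, suranyiProd, suranyiTerm, zero_add, sum_range_one, Nat.cast_zero,
    zero_mul, zpow_zero, one_mul, sub_zero, add_zero]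
  rw [qBinom_zero_right hq (by omega), qBinom_zero_right hq (by omega), one_mul, mul_one]
  by_cases hAC : 0 ≤ (A : ℤ) + C - 1
  · rw [qBinom_zero_right hq hAC, one_mul]
  · rw [qBinom_eq_zero (m := B + C - 1) (k := B) (by omega), mul_zero]

theorem suranyiSum_of_add_eq_one (hq : ¬IsOfFinOrder q) (A : ℕ) {B C : ℤ} (N : ℕ)
    (hBC : B + C = 1) :
    suranyiSum q A B C N = suranyiProd q A B C N := by
  obtain rfl : C = 1 - B := by omega
  have hterm (r : ℕ) (hr : (r : ℤ) ≠ B) : suranyiTerm q A B (1 - B) N r = 0 := by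
    rw [suranyiTerm, qBinom_eq_zero (m := B + (1 - B) - 1) (k := B - r) (by omega), mul_zero,
      zero_mul]
  unfold suranyiSum suranyiProd
  rw [show B + (1 - B) + N - 1 = N by ring]
  by_cases hB : 0 ≤ B ∧ B ≤ N
  · lift B to ℕ using hB.1
    rw [sum_eq_single_of_mem B (mem_range.mpr (by omega)) fun r _ hr => hterm r (by omega),
      suranyiTerm, show (B : ℤ) * (1 - B + B - 1) = 0 by ring, zpow_zero, one_mul,
      show (B : ℤ) + (1 - B) - 1 = 0 by ring, sub_self, qBinom_zero_right hq le_rfl, mul_one,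
      show (A : ℤ) + B + (1 - B) + N - B - 1 = A + N - B by ring,
      show (A : ℤ) + (1 - B) + N - 1 = A + N - B by ring]
    rcases le_or_gt B A with hBA | hAB
    · obtain ⟨x, rfl⟩ := Nat.exists_eq_add_of_le' hBA
      obtain ⟨y, rfl⟩ := Nat.exists_eq_add_of_le' (by exact_mod_cast hB.2 : B ≤ N)
      convert qBinom_mul_qBinom_eq_qBinom_mul_qBinom hq x y B using 3 <;> push_cast <;> ring
    · rw [qBinom_eq_zero (m := A) (k := B) (by omega),
        qBinom_eq_zero (m := A + N - B) (k := N) (by omega), mul_zero, zero_mul]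
  · rw [sum_eq_zero fun r hr => hterm r (by have := mem_range.mp hr; omega),
      qBinom_eq_zero (m := N) (k := B) (by omega), mul_zero]

theorem suranyiSum_eq_suranyiProd (hq : ¬IsOfFinOrder q) (hq₀ : q ≠ 0) (A N : ℕ) :
    ∀ {B C : ℤ}, 1 ≤ B + C → suranyiSum q A B C N = suranyiProd q A B C N := by
  induction N with
  | zero => exact suranyiSum_zero hq A
  | succ N ihN =>
    suffices h : ∀ k : ℕ, ∀ {B C : ℤ}, B + C = k + 1 →
        suranyiSum q A B C (N + 1) = suranyiProd q A B C (N + 1) from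
      fun {B C} hBC => h (B + C - 1).toNat (by omega)
    intro k
    induction k with
    | zero => exact fun hBC => suranyiSum_of_add_eq_one hq A (N + 1) (by omega)
    | succ k ihk =>
      intro B C hBC
      rw [suranyiSum_succ hq hq₀ A N (by omega), suranyiProd_succ hq A N (by omega),
        ihN (by omega), ihk (B := B) (C := C - 1) (by omega),
        ihk (B := B - 1) (C := C) (by omega)]

end

theorem RatFunc.not_isOfFinOrder_X {K : Type*} [Field K] :
    ¬IsOfFinOrder (RatFunc.X : RatFunc K) := by
  rw [isOfFinOrder_iff_pow_eq_one]
  rintro ⟨n, hn, h⟩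
  have : (Polynomial.X ^ n : Polynomial K) = 1 :=
    RatFunc.algebraMap_injective K (by simpa using h)
  simpa [hn.ne'] using congrArg Polynomial.natDegree this

theorem q_suranyi_general_general (A B N C : ℕ) (hC : 0 < C) :
    ∑ r ∈ Finset.range (min (min A B) (min N (A + B + C + N - 1)) + 1),
      (RatFunc.X : RatFunc ℚ) ^ (r * (C + r - 1)) *
        qBinom RatFunc.X ((A : ℤ) + B + C + N - r - 1) ((N : ℤ) - r) *
        qBinom RatFunc.X ((B : ℤ) + C - 1) ((B : ℤ) - r) *
        qBinom RatFunc.X (A : ℤ) (r : ℤ)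
    = qBinom RatFunc.X ((A : ℤ) + C + N - 1) (N : ℤ) *
        qBinom RatFunc.X ((B : ℤ) + C + N - 1) (B : ℤ) := by
  have hvanish (r : ℕ) (hr : r ∈ range (N + 1))
      (hr' : r ∉ range (min (min A B) (min N (A + B + C + N - 1)) + 1)) :
      suranyiTerm RatFunc.X A B C N r = 0 := by
    simp only [mem_range] at hr hr'
    rcases (by omega : A < r ∨ B < r) with h | h
    · rw [suranyiTerm, qBinom_eq_zero (m := A) (k := r) (by omega), mul_zero]
    · rw [suranyiTerm, qBinom_eq_zero (m := B + C - 1) (k := B - r) (by omega), mul_zero,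
        zero_mul]
  rw [← suranyiProd, ← suranyiSum_eq_suranyiProd RatFunc.not_isOfFinOrder_X RatFunc.X_ne_zero
    A N (by omega), suranyiSum, ← sum_subset (range_subset_range.mpr (by omega)) hvanish]
  refine sum_congr rfl fun r _ => ?_
  rw [suranyiTerm, ← zpow_natCast]
  push_cast [Nat.cast_sub (by omega : 1 ≤ C + r)]
  rfl

theorem q_suranyi_general (A B N C : ℕ) (hA : 0 < A) (hB : 0 < B) (hN : 0 < N)
    (hC : 0 < C) (h : A + B < C + N) :
    ∑ r ∈ Finset.range (min (min A B) (min N (A + B + C + N - 1)) + 1),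
      (RatFunc.X : RatFunc ℚ) ^ (r * (C + r - 1)) *
        qBinom RatFunc.X ((A : ℤ) + B + C + N - r - 1) ((N : ℤ) - r) *
        qBinom RatFunc.X ((B : ℤ) + C - 1) ((B : ℤ) - r) *
        qBinom RatFunc.X (A : ℤ) (r : ℤ)
    = qBinom RatFunc.X ((A : ℤ) + C + N - 1) (N : ℤ) *
        qBinom RatFunc.X ((B : ℤ) + C + N - 1) (B : ℤ) :=
  q_suranyi_general_general A B N C hC
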